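/- The characteristic polynomial of the 2N×2N matrix B factors as det(w·I_{2N} − B) = (w + β)^N · Π_{k=0}^{N−1} (w − λω_k) for all w ∈ ℂ; in particular the eigenvalues of B are exactly λω_0, …, λω_{N−1} together with −β, the latter with algebraic multiplicity at least N. -/

import Mathlib

open Matrix Complex Finset

noncomputable section

/-- The N×N matrix with -1 on the diagonal and 1 on the (cyclic) superdiagonal. -/
def ringMat (N : ℕ) : Matrix (Fin N) (Fin N) ℝ :=
  fun n m => if (m : ℕ) = (n : ℕ) then -1 else if (m : ℕ) = ((n : ℕ) + 1) % N then 1 else 0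

/-- γ_k = e^{2πik/N} -/
def gam (N k : ℕ) : ℂ := Complex.exp (2 * Real.pi * Complex.I * k / N)

/-- The 2N×2N block matrix B = [[λA, A], [0, −β I_N]] (complexified). -/
def blockB (N : ℕ) (lam beta : ℝ) : Matrix (Fin N ⊕ Fin N) (Fin N ⊕ Fin N) ℂ :=
  Matrix.fromBlocks ((lam : ℂ) • (ringMat N).map Complex.ofReal)
    ((ringMat N).map Complex.ofReal) 0 (-(beta : ℂ) • 1)


/-! `w • 1 - B` is block upper triangular, so `charpoly B = charpoly (λA) · (X + β)^N`. Writing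
`A = P - 1` with `P` the cyclic shift, the Vandermonde matrix of the `N`-th roots of unity (the
discrete Fourier matrix) is invertible and diagonalises `P` with eigenvalues `γ_k`, so
`charpoly (λA) = ∏ₖ (X - λωₖ)`. The determinant, the spectrum and the multiplicity of `-β` are
all read off this factorisation. -/

open Polynomial

namespace Matrix

variable {n R : Type*} [Fintype n] [DecidableEq n] [CommRing R]

theorem charpoly_eq_prod_of_mul_eq_mul_diagonal {M V : Matrix n n R} {μ : n → R}
    (hV : IsUnit V.det) (h : M * V = V * diagonal μ) :
    M.charpoly = ∏ i, (X - C (μ i)) := by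
  have hM : M = V * (diagonal μ * V⁻¹) := by
    rw [← Matrix.mul_assoc, ← h, Matrix.mul_assoc, mul_nonsing_inv _ hV, Matrix.mul_one]
  rw [hM, charpoly_mul_comm, Matrix.mul_assoc, nonsing_inv_mul _ hV, Matrix.mul_one,
    charpoly_diagonal]

end Matrix

open Matrix

theorem val_finRotate_eq_mod {N : ℕ} [NeZero N] (i : Fin N) :
    (finRotate N i : ℕ) = (i + 1) % N := by
  rw [finRotate_apply, Fin.val_add, Fin.val_one', Nat.add_mod_mod]

theorem permMatrix_finRotate_mul_vandermonde {R : Type*} [CommRing R] {N : ℕ} [NeZero N]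
    {ζ : R} (hζ : ζ ^ N = 1) :
    (finRotate N).permMatrix R * vandermonde (fun i : Fin N => ζ ^ (i : ℕ)) =
      vandermonde (fun i : Fin N => ζ ^ (i : ℕ)) * diagonal (fun k : Fin N => ζ ^ (k : ℕ)) := by
  ext i k
  rw [PEquiv.toMatrix_toPEquiv_mul, submatrix_apply, mul_diagonal, vandermonde_apply,
    vandermonde_apply, id, val_finRotate_eq_mod, ← pow_eq_pow_mod _ hζ]
  ring

-- `2 ≤ N` keeps the diagonal and the cyclic superdiagonal of `ringMat N` apart.
theorem ringMat_map_ofReal {N : ℕ} [NeZero N] (hN : 2 ≤ N) :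
    (ringMat N).map ((↑) : ℝ → ℂ) = (finRotate N).permMatrix ℂ - 1 := by
  ext i j
  have hrot : finRotate N i ≠ i := by
    simp only [finRotate_apply, Ne, add_eq_left, Fin.one_eq_zero_iff]
    omega
  simp only [map_apply, Matrix.sub_apply, Equiv.Perm.permMatrix, PEquiv.toMatrix_apply,
    Equiv.toPEquiv_apply, Option.mem_def, Option.some_inj, one_apply, ringMat,
    ← val_finRotate_eq_mod, Fin.val_inj]
  by_cases hji : j = i
  · subst hji
    rw [if_pos rfl, if_neg hrot, if_pos rfl]
    norm_num
  · rw [if_neg hji, if_neg (Ne.symm hji)]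
    by_cases hj : j = finRotate N i
    · rw [if_pos hj, if_pos hj.symm]; norm_num
    · rw [if_neg hj, if_neg (Ne.symm hj)]; norm_num

theorem gam_eq_pow (N k : ℕ) : gam N k = gam N 1 ^ k := by
  rw [gam, gam, ← Complex.exp_nat_mul]
  congr 1
  push_cast
  ring

theorem isPrimitiveRoot_gam_one {N : ℕ} (hN : N ≠ 0) : IsPrimitiveRoot (gam N 1) N := by
  simpa [gam] using Complex.isPrimitiveRoot_exp N hN

theorem charpoly_smul_ringMat {N : ℕ} (hN : 2 ≤ N) (c : ℂ) :
    (c • (ringMat N).map ((↑) : ℝ → ℂ)).charpoly =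
      ∏ k ∈ range N, (X - C (c * (gam N k - 1))) := by
  have : NeZero N := ⟨by omega⟩
  have hζ := isPrimitiveRoot_gam_one (N := N) (by omega)
  set V := vandermonde fun i : Fin N => gam N 1 ^ (i : ℕ)
  have hV : IsUnit V.det := isUnit_iff_ne_zero.2 <|
    det_vandermonde_ne_zero_iff.2 fun a b hab => Fin.ext (hζ.pow_inj a.2 b.2 hab)
  have hdiag : (c • (ringMat N).map ((↑) : ℝ → ℂ)) * V =
      V * diagonal fun k : Fin N => c * (gam N 1 ^ (k : ℕ) - 1) := by
    have hμ : (diagonal fun k : Fin N => c * (gam N 1 ^ (k : ℕ) - 1)) =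
        c • (diagonal (fun k : Fin N => gam N 1 ^ (k : ℕ)) - 1) := by
      rw [← diagonal_one, diagonal_sub, ← diagonal_smul]
      rfl
    rw [hμ, ringMat_map_ofReal hN, Matrix.smul_mul, Matrix.sub_mul, Matrix.mul_smul,
      Matrix.mul_sub, permMatrix_finRotate_mul_vandermonde hζ.pow_eq_one, Matrix.one_mul,
      Matrix.mul_one]
  rw [charpoly_eq_prod_of_mul_eq_mul_diagonal hV hdiag,
    Fin.prod_univ_eq_prod_range (fun k => X - C (c * (gam N 1 ^ k - 1))) N]
  simp only [← gam_eq_pow]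

theorem charpoly_blockB {N : ℕ} (hN : 2 ≤ N) (lam beta : ℝ) :
    (blockB N lam beta).charpoly =
      (X - C (-(beta : ℂ))) ^ N * ∏ k ∈ range N, (X - C (lam * (gam N k - 1))) := by
  rw [blockB, charpoly_fromBlocks_zero₂₁, charpoly_smul_ringMat hN, mul_comm,
    smul_one_eq_diagonal, charpoly_diagonal, prod_const, card_univ, Fintype.card_fin]

theorem det_smul_one_sub_blockB {N : ℕ} (hN : 2 ≤ N) (lam beta : ℝ) (w : ℂ) :
    det (w • (1 : Matrix (Fin N ⊕ Fin N) (Fin N ⊕ Fin N) ℂ) - blockB N lam beta) =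
      (w + beta) ^ N * ∏ k ∈ range N, (w - lam * (gam N k - 1)) := by
  rw [smul_one_eq_diagonal, ← scalar_apply, ← eval_charpoly, charpoly_blockB hN]
  simp [eval_prod]

theorem stmt5_general (N : ℕ) (hN : 2 ≤ N) (lam beta : ℝ) :
    (∀ w : ℂ,
        Matrix.det (w • (1 : Matrix (Fin N ⊕ Fin N) (Fin N ⊕ Fin N) ℂ) - blockB N lam beta) =
          (w + beta) ^ N * ∏ k ∈ Finset.range N, (w - lam * (gam N k - 1))) ∧
    spectrum ℂ (blockB N lam beta) =
      {w : ℂ | ∃ k < N, w = lam * (gam N k - 1)} ∪ {-(beta : ℂ)} ∧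
    N ≤ Polynomial.rootMultiplicity (-(beta : ℂ)) (Matrix.charpoly (blockB N lam beta)) := by
  have hdet := det_smul_one_sub_blockB hN lam beta
  refine ⟨hdet, ?_, ?_⟩
  · ext w
    rw [mem_spectrum_iff_isRoot_charpoly, IsRoot.def, eval_charpoly, scalar_apply,
      ← smul_one_eq_diagonal, hdet, mul_eq_zero, pow_eq_zero_iff (by omega), prod_eq_zero_iff]
    simp only [Set.mem_union, Set.mem_ofPred_eq, Set.mem_singleton_iff, mem_range, sub_eq_zero,
      add_eq_zero_iff_eq_neg]
    exact or_comm
  · rw [le_rootMultiplicity_iff (charpoly_monic _).ne_zero, charpoly_blockB hN]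
    exact dvd_mul_right _ _

/-- det(w·I_{2N} − B) = (w+β)^N ∏_{k=0}^{N-1}(w − λω_k); in particular the
eigenvalues of B are exactly the λω_k together with −β, the latter with algebraic
multiplicity at least N. -/
theorem stmt5 (N : ℕ) (hN : 2 ≤ N) (lam beta : ℝ) (hlam : 0 < lam) (hbeta : 0 < beta) :
    (∀ w : ℂ,
        Matrix.det (w • (1 : Matrix (Fin N ⊕ Fin N) (Fin N ⊕ Fin N) ℂ) - blockB N lam beta) =
          (w + beta) ^ N * ∏ k ∈ Finset.range N, (w - lam * (gam N k - 1))) ∧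
    spectrum ℂ (blockB N lam beta) =
      {w : ℂ | ∃ k < N, w = lam * (gam N k - 1)} ∪ {-(beta : ℂ)} ∧
    N ≤ Polynomial.rootMultiplicity (-(beta : ℂ)) (Matrix.charpoly (blockB N lam beta)) :=
  stmt5_general N hN lam beta
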